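/- Let q be a power of a prime, m a positive integer, N a positive divisor of q^m - 1, and c an arbitrary element of F_q. Then Z_{q,m,N}(c) = (1/q)·( ((q^m - 1)/N)·φ(N) + f_0(N, c, Δ) ). -/

import Mathlib

/-!
Detect the trace condition with the additive characters of `K`:
`q · Z = ∑_{b ∈ K} ∑_{ξ N-free} χ_q(b (Tr ξ - c))`, and by transitivity of the trace
`χ_q(b · Tr ξ) = χ_{q^m}(b ξ)`. The term `b = 0` counts the `N`-free elements, which are the
`α^k` with `k < q^m - 1` coprime to `N`, so there are `(q^m - 1)/N · φ(N)` of them. The other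
`b` are `β^i = α^{Qi}`; writing the indicator of `gcd(k, N) = 1` as `∑_{d ∣ gcd(k, N)} μ(d)`
turns the sum of `χ_{q^m}(α^{Qi} ξ)` over `N`-free `ξ` into
`∑_{d ∣ N} μ(d) η_{Qi}^{(d)} = Δ_{Qi}(N)`.
-/

open scoped BigOperators
open scoped Classical

/-- The canonical additive character of a finite field `F` of characteristic `p`:
`z ↦ exp(2πi·Tr_{F/F_p}(z)/p)`. -/
noncomputable def canChar (p : ℕ) (F : Type) [Field F] [Fintype F] [CharP F p] : F → ℂ :=
  fun z => Complex.exp (2 * Real.pi * Complex.I *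
    (((@Algebra.trace (ZMod p) F _ _ (ZMod.algebra F p)) z).val : ℂ) / (p : ℂ))

/-- The Gaussian period `η_k^{(d, #L)}` attached to a generator `α` of `Lˣ`:
the sum of `χ` over the cyclotomic class `α^k⟨α^d⟩`. -/
noncomputable def gaussPeriod (p : ℕ) (L : Type) [Field L] [Fintype L] [CharP L p]
    (α : Lˣ) (d : ℕ) (k : ℤ) : ℂ :=
  ∑ x ∈ Finset.univ.filter (fun x : Lˣ => ∃ i : ℕ, x = α ^ k * (α ^ d) ^ i),
    canChar p L (x : L)

/-- `Δ_k(N) = ∑_{d ∣ N} μ(d)·η_k^{(d, #L)}`. -/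
noncomputable def DeltaSum (p : ℕ) (L : Type) [Field L] [Fintype L] [CharP L p]
    (α : Lˣ) (N : ℕ) (k : ℤ) : ℂ :=
  ∑ d ∈ N.divisors, ((ArithmeticFunction.moebius d : ℤ) : ℂ) * gaussPeriod p L α d k

/-- `ξ` is `N`-free (w.r.t. the fixed generator `α`): `ξ = α^k` for some `k` coprime to `N`. -/
def IsNFree {G : Type} [Group G] (α ξ : G) (N : ℕ) : Prop :=
  ∃ k : ℕ, Nat.Coprime k N ∧ ξ = α ^ k

/-- `Z_{q,m,N}(c)`: the number of `N`-free elements of `Lˣ` with trace (to `K`) equal to `c`. -/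
noncomputable def Zcount (K L : Type) [Field K] [Field L] [Algebra K L]
    (α : Lˣ) (N : ℕ) (c : K) : ℕ :=
  {ξ : Lˣ | IsNFree α ξ N ∧ Algebra.trace K L (ξ : L) = c}.ncard

/-- `P_{q,m,N}(c)`: the number of elements of `Lˣ` of multiplicative order exactly `N`
with trace (to `K`) equal to `c`. -/
noncomputable def Pcount (K L : Type) [Field K] [Field L] [Algebra K L]
    (N : ℕ) (c : K) : ℕ :=
  {ξ : Lˣ | orderOf ξ = N ∧ Algebra.trace K L (ξ : L) = c}.ncard

/-- The radical of `n`: the product of the distinct prime factors of `n`. -/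
def Rad (n : ℕ) : ℕ := ∏ ℓ ∈ n.primeFactors, ℓ

/-- `f_k(N, c, Δ) = ∑_{i=0}^{q-2} conj(χ_q(β^i·c))·Δ_{Qi+k}(N)`, where `β ∈ K` corresponds
to `α^Q` (a generator of `Kˣ`). -/
noncomputable def fsum (p : ℕ) (K L : Type) [Field K] [Fintype K] [CharP K p]
    [Field L] [Fintype L] [CharP L p]
    (α : Lˣ) (β : K) (q Q N : ℕ) (c : K) (k : ℤ) : ℂ :=
  ∑ i ∈ Finset.range (q - 1),
    (starRingEnd ℂ) (canChar p K (β ^ i * c)) * DeltaSum p L α N ((Q * i : ℕ) + k)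

open Finset ArithmeticFunction
open scoped ArithmeticFunction.Moebius

section AdditiveCharacter

variable (p : ℕ) [Fact p.Prime] {F : Type} [Field F] [Fintype F] [CharP F p]

variable (F) in
noncomputable def canAddChar : AddChar F ℂ :=
  letI := ZMod.algebra F p
  ZMod.stdAddChar.compAddMonoidHom (Algebra.trace (ZMod p) F).toAddMonoidHom

lemma canAddChar_apply (x : F) : canAddChar p F x = canChar p F x := by
  rw [canAddChar, AddChar.compAddMonoidHom_apply, ZMod.stdAddChar_apply, ZMod.toCircle_apply]
  rfl

variable (F) in
lemma isPrimitive_canAddChar : (canAddChar p F).IsPrimitive := by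
  obtain rfl := ringChar.eq F p
  let := ZMod.algebra F (ringChar F)
  refine AddChar.IsPrimitive.of_ne_one (AddChar.ne_one_iff.2 ?_)
  obtain ⟨t, ht⟩ := FiniteField.trace_to_zmod_nondegenerate F one_ne_zero
  refine ⟨t, fun h => ht ?_⟩
  rw [one_mul]
  rwa [← (ZMod.stdAddChar (N := ringChar F)).map_zero_eq_one, canAddChar,
    AddChar.compAddMonoidHom_apply, ZMod.injective_stdAddChar.eq_iff] at h

lemma canChar_add (x y : F) : canChar p F (x + y) = canChar p F x * canChar p F y := by
  simp only [← canAddChar_apply, AddChar.map_add_eq_mul]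

lemma canChar_neg (x : F) : canChar p F (-x) = starRingEnd ℂ (canChar p F x) := by
  simp only [← canAddChar_apply, AddChar.map_neg_eq_conj]

lemma canChar_zero : canChar p F 0 = 1 := by
  rw [← canAddChar_apply, AddChar.map_zero_eq_one]

lemma sum_canChar_mul (a : F) :
    ∑ b : F, canChar p F (b * a) = if a = 0 then (Fintype.card F : ℂ) else 0 := by
  simp only [← canAddChar_apply]
  exact_mod_cast AddChar.sum_mulShift a (isPrimitive_canAddChar p F)

lemma canChar_trace {K L : Type} [Field K] [Fintype K] [CharP K p] [Field L] [Fintype L]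
    [CharP L p] [Algebra K L] (x : L) : canChar p K (Algebra.trace K L x) = canChar p L x := by
  let := ZMod.algebra K p
  let := ZMod.algebra L p
  have : IsScalarTower (ZMod p) K L := IsScalarTower.of_algebraMap_eq' (Subsingleton.elim _ _)
  unfold canChar
  rw [Algebra.trace_trace]

end AdditiveCharacter

section Moebius

lemma sum_divisors_filter_dvd_moebius {N : ℕ} (hN : N ≠ 0) (k : ℕ) :
    ∑ d ∈ N.divisors.filter (· ∣ k), μ d = if k.Coprime N then 1 else 0 := by
  have hdivisors : N.divisors.filter (· ∣ k) = (N.gcd k).divisors := by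
    ext d
    simp only [mem_filter, Nat.mem_divisors, Nat.dvd_gcd_iff, ne_eq, Nat.gcd_eq_zero_iff, hN,
      false_and, not_false_eq_true, and_true]
  rw [hdivisors, ← coe_mul_zeta_apply, moebius_mul_coe_zeta, one_apply, Nat.gcd_comm]

lemma sum_filter_coprime_eq_sum_moebius {R : Type*} [CommRing R] {N : ℕ} (hN : N ≠ 0)
    (s : Finset ℕ) (g : ℕ → R) :
    ∑ k ∈ s.filter (·.Coprime N), g k =
      ∑ d ∈ N.divisors, ((μ d : ℤ) : R) * ∑ k ∈ s.filter (d ∣ ·), g k := by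
  calc ∑ k ∈ s.filter (·.Coprime N), g k
      = ∑ k ∈ s, ((∑ d ∈ N.divisors.filter (· ∣ k), μ d : ℤ) : R) * g k := by
        rw [sum_filter]
        refine sum_congr rfl fun k _ => ?_
        rw [sum_divisors_filter_dvd_moebius hN]
        split_ifs <;> simp
    _ = _ := by
        simp_rw [Int.cast_sum, sum_filter, sum_mul, mul_sum, ite_mul, zero_mul, mul_ite, mul_zero]
        exact sum_comm

lemma card_filter_coprime_range_mul (N t : ℕ) :
    #((range (N * t)).filter (·.Coprime N)) = t * N.totient := by
  induction t with
  | zero => simp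
  | succ t ih =>
    have hsplit : range (N * (t + 1)) = range (N * t) ∪ Ico (N * t) (N * t + N) := by
      rw [range_eq_Ico, range_eq_Ico, mul_add_one, Ico_union_Ico_eq_Ico (Nat.zero_le _)
        (Nat.le_add_right _ _)]
    have hperiod : #((Ico (N * t) (N * t + N)).filter (·.Coprime N)) = N.totient := by
      rw [← Nat.filter_coprime_Ico_eq_totient N (N * t)]
      exact congrArg card (filter_congr fun x _ => Nat.coprime_comm)
    have hdisj : Disjoint (range (N * t)) (Ico (N * t) (N * t + N)) := by
      rw [range_eq_Ico]
      exact Ico_disjoint_Ico_consecutive 0 (N * t) (N * t + N)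
    rw [hsplit, filter_union, card_union_of_disjoint (disjoint_filter_filter hdisj), ih, hperiod,
      add_one_mul]

end Moebius

section CyclicGroup

variable {G : Type} [Group G] (α : G)

lemma injOn_pow_filter_range_orderOf (P : ℕ → Prop) [DecidablePred P] :
    Set.InjOn (α ^ ·) ((range (orderOf α)).filter P : Set ℕ) :=
  pow_injOn_Iio_orderOf.mono fun k hk => by
    simpa using (mem_range.1 (mem_filter.1 hk).1)

variable [Fintype G] [DecidableEq G]

lemma filter_isNFree_eq_image {N : ℕ} (hN : N ∣ orderOf α) :
    univ.filter (IsNFree α · N) = ((range (orderOf α)).filter (·.Coprime N)).image (α ^ ·) := by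
  ext ξ
  simp only [mem_filter, mem_univ, true_and, mem_image, mem_range]
  constructor
  · rintro ⟨k, hk, rfl⟩
    refine ⟨k % orderOf α, ⟨Nat.mod_lt _ (orderOf_pos α), ?_⟩, pow_mod_orderOf α k⟩
    rwa [Nat.Coprime, ((Nat.mod_modEq k _).of_dvd hN).gcd_eq]
  · rintro ⟨k, ⟨-, hk⟩, rfl⟩
    exact ⟨k, hk, rfl⟩

lemma sum_filter_isNFree {M : Type*} [AddCommMonoid M] {N : ℕ} (hN : N ∣ orderOf α) (f : G → M) :
    ∑ ξ ∈ univ.filter (IsNFree α · N), f ξ =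
      ∑ k ∈ (range (orderOf α)).filter (·.Coprime N), f (α ^ k) := by
  rw [filter_isNFree_eq_image α hN, sum_image (injOn_pow_filter_range_orderOf α _)]

lemma card_filter_isNFree {N : ℕ} (hN : N ∣ orderOf α) :
    #(univ.filter (IsNFree α · N)) = orderOf α / N * N.totient := by
  obtain ⟨t, ht⟩ := hN
  have hN0 : 0 < N := Nat.pos_of_mul_pos_right (ht ▸ orderOf_pos α)
  rw [filter_isNFree_eq_image α ⟨t, ht⟩, card_image_of_injOn (injOn_pow_filter_range_orderOf α _),
    ht, card_filter_coprime_range_mul, Nat.mul_div_cancel_left t hN0]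

lemma filter_cyclotomicClass_eq_image {d : ℕ} (hd : d ∣ orderOf α) (j : ℤ) :
    univ.filter (fun x => ∃ i : ℕ, x = α ^ j * (α ^ d) ^ i) =
      ((range (orderOf α)).filter (d ∣ ·)).image (fun k => α ^ j * α ^ k) := by
  ext x
  simp only [mem_filter, mem_univ, true_and, mem_image, mem_range]
  constructor
  · rintro ⟨i, rfl⟩
    refine ⟨d * i % orderOf α, ⟨Nat.mod_lt _ (orderOf_pos α),
      (Nat.dvd_mod_iff hd).2 (dvd_mul_right d i)⟩, ?_⟩
    rw [pow_mod_orderOf, pow_mul]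
  · rintro ⟨k, ⟨-, i, rfl⟩, rfl⟩
    exact ⟨i, by rw [pow_mul]⟩

end CyclicGroup

section GaussianPeriods

variable {p : ℕ} {L : Type} [Field L] [Fintype L] [CharP L p]

lemma gaussPeriod_eq_sum (α : Lˣ) {d : ℕ} (hd : d ∣ orderOf α) (j : ℤ) :
    gaussPeriod p L α d j =
      ∑ k ∈ (range (orderOf α)).filter (d ∣ ·), canChar p L (((α ^ j : Lˣ) : L) * (α : L) ^ k) := by
  rw [gaussPeriod, filter_cyclotomicClass_eq_image α hd j,
    sum_image fun a ha b hb hab => injOn_pow_filter_range_orderOf α _ ha hb (mul_left_cancel hab)]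
  simp only [Units.val_mul, Units.val_pow_eq_pow_val]

lemma sum_filter_isNFree_canChar_eq_deltaSum (α : Lˣ) {N : ℕ} (hN : N ∣ orderOf α) (j : ℤ) :
    ∑ ξ ∈ univ.filter (IsNFree α · N), canChar p L (((α ^ j : Lˣ) : L) * ξ) =
      DeltaSum p L α N j := by
  have hN0 : N ≠ 0 := by
    rintro rfl
    exact (orderOf_pos α).ne' (zero_dvd_iff.1 hN)
  rw [sum_filter_isNFree α hN, sum_filter_coprime_eq_sum_moebius hN0, DeltaSum]
  refine sum_congr rfl fun d hd => ?_
  rw [gaussPeriod_eq_sum α ((Nat.dvd_of_mem_divisors hd).trans hN)]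
  simp only [Units.val_pow_eq_pow_val]

end GaussianPeriods

lemma card_mul_card_filter_trace_eq_sum (p : ℕ) [Fact p.Prime] {K L ι : Type} [Field K] [Fintype K]
    [CharP K p] [Field L] [Fintype L] [CharP L p] [Algebra K L] (A : Finset ι) (x : ι → L)
    (c : K) :
    (Fintype.card K : ℂ) * #(A.filter fun i => Algebra.trace K L (x i) = c) =
      ∑ b : K, starRingEnd ℂ (canChar p K (b * c)) *
        ∑ i ∈ A, canChar p L (algebraMap K L b * x i) := by
  have hdetect (t : K) :
      ∑ b : K, canChar p K (b * (t - c)) = if t = c then (Fintype.card K : ℂ) else 0 := by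
    simp only [sum_canChar_mul, sub_eq_zero]
  have hsplit (b : K) (y : L) : canChar p K (b * (Algebra.trace K L y - c)) =
      starRingEnd ℂ (canChar p K (b * c)) * canChar p L (algebraMap K L b * y) := by
    rw [mul_sub, sub_eq_neg_add, canChar_add, canChar_neg,
      ← canChar_trace p (K := K) (algebraMap K L b * y), ← Algebra.smul_def, map_smul, smul_eq_mul]
  calc (Fintype.card K : ℂ) * #(A.filter fun i => Algebra.trace K L (x i) = c)
      = ∑ i ∈ A, ∑ b : K, canChar p K (b * (Algebra.trace K L (x i) - c)) := by
        simp only [hdetect, ← sum_filter, sum_const, nsmul_eq_mul, mul_comm]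
    _ = _ := by
        simp only [hsplit, mul_sum]
        exact sum_comm

lemma sum_eq_add_sum_range_pow {K M : Type*} [Field K] [Fintype K] [AddCommMonoid M] {β : K}
    (hβ : orderOf β = Fintype.card K - 1) (g : K → M) :
    ∑ b, g b = g 0 + ∑ i ∈ range (Fintype.card K - 1), g (β ^ i) := by
  have hβ0 : β ≠ 0 := by
    rintro rfl
    have := Fintype.one_lt_card (α := K)
    rw [orderOf_zero] at hβ
    omega
  have hinj : Set.InjOn (β ^ ·) (range (Fintype.card K - 1) : Set ℕ) := by
    rw [coe_range, ← hβ]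
    exact pow_injOn_Iio_orderOf
  have himage : (range (Fintype.card K - 1)).image (β ^ ·) = univ.erase 0 := by
    refine eq_of_subset_of_card_le (fun y hy => ?_) ?_
    · obtain ⟨i, -, rfl⟩ := mem_image.1 hy
      exact mem_erase.2 ⟨pow_ne_zero i hβ0, mem_univ _⟩
    · rw [card_image_of_injOn hinj, card_erase_of_mem (mem_univ _), card_univ, card_range]
  rw [← add_sum_erase _ g (mem_univ 0), ← himage, sum_image hinj]

lemma orderOf_eq_of_algebraMap_eq_pow {K L : Type} [Field K] [Field L] [Finite L] [Algebra K L]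
    {α : Lˣ} {β : K} {Q n : ℕ} (hQn : Q * n = orderOf α) (hβ : algebraMap K L β = (α : L) ^ Q) :
    orderOf β = n := by
  have hQ0 : Q ≠ 0 := by
    rintro rfl
    exact (orderOf_pos α).ne' (by rw [← hQn, zero_mul])
  rw [← orderOf_injective (algebraMap K L : K →* L) (algebraMap K L).injective β,
    MonoidHom.coe_coe, hβ, ← Units.val_pow_eq_pow_val, orderOf_units,
    orderOf_pow_of_dvd hQ0 ⟨n, hQn.symm⟩, ← hQn, Nat.mul_div_cancel_left n (Nat.pos_of_ne_zero hQ0)]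

lemma Zcount_eq_card_filter (K L : Type) [Field K] [Field L] [Fintype L] [Algebra K L] (α : Lˣ)
    (N : ℕ) (c : K) :
    Zcount K L α N c =
      #(((univ : Finset Lˣ).filter (IsNFree α · N)).filter
        fun ξ : Lˣ => Algebra.trace K L ξ = c) := by
  rw [Zcount, ← Set.ncard_coe_finset]
  congr 1
  ext ξ
  simp

theorem stmt_13_general (p m q Q N : ℕ) [Fact p.Prime]
    (hQ : Q = (q ^ m - 1) / (q - 1))
    (K L : Type) [Field K] [Fintype K] [CharP K p] [Field L] [Fintype L] [CharP L p]
    [Algebra K L]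
    (hK : Fintype.card K = q) (hL : Fintype.card L = q ^ m)
    (α : Lˣ) (hα : ∀ x : Lˣ, x ∈ Subgroup.zpowers α)
    (β : K) (hβ : algebraMap K L β = (α : L) ^ Q)
    (hN : N ∣ q ^ m - 1) (c : K) :
    (Zcount K L α N c : ℂ) =
      (1 / (q : ℂ)) * ((((q ^ m - 1) / N : ℕ) : ℂ) * (Nat.totient N : ℂ) +
        fsum p K L α β q Q N c 0) := by
  subst hK
  have hordα : orderOf α = Fintype.card K ^ m - 1 := by
    rw [orderOf_eq_card_of_forall_mem_zpowers hα, Nat.card_eq_fintype_card, Fintype.card_units, hL]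
  have hordβ : orderOf β = Fintype.card K - 1 := by
    refine orderOf_eq_of_algebraMap_eq_pow ?_ hβ
    rw [hQ, hordα, Nat.div_mul_cancel (by simpa using Nat.sub_dvd_pow_sub_pow _ 1 m)]
  have hq : (Fintype.card K : ℂ) ≠ 0 := Nat.cast_ne_zero.2 Fintype.card_ne_zero
  rw [Zcount_eq_card_filter, one_div, eq_inv_mul_iff_mul_eq₀ hq,
    card_mul_card_filter_trace_eq_sum p _ Units.val, sum_eq_add_sum_range_pow hordβ, fsum]
  congr 1
  · simp only [_root_.map_zero, zero_mul, canChar_zero, map_one, one_mul, sum_const, nsmul_eq_mul,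
      mul_one, card_filter_isNFree α (hordα ▸ hN), hordα, Nat.cast_mul]
  · refine sum_congr rfl fun i _ => ?_
    rw [← sum_filter_isNFree_canChar_eq_deltaSum α (hordα ▸ hN), map_pow, hβ, add_zero,
      zpow_natCast, Units.val_pow_eq_pow_val, pow_mul]

/-- the general formula for `Z_{q,m,N}(c)`. -/
theorem stmt_13 (p s m q Q N : ℕ) [Fact p.Prime] (hs : 0 < s) (hm : 0 < m)
    (hq : q = p ^ s) (hQ : Q = (q ^ m - 1) / (q - 1))
    (K L : Type) [Field K] [Fintype K] [CharP K p] [Field L] [Fintype L] [CharP L p]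
    [Algebra K L]
    (hK : Fintype.card K = q) (hL : Fintype.card L = q ^ m)
    (α : Lˣ) (hα : ∀ x : Lˣ, x ∈ Subgroup.zpowers α)
    (β : K) (hβ : algebraMap K L β = (α : L) ^ Q)
    (hN : N ∣ q ^ m - 1) (c : K) :
    (Zcount K L α N c : ℂ) =
      (1 / (q : ℂ)) * ((((q ^ m - 1) / N : ℕ) : ℂ) * (Nat.totient N : ℂ) +
        fsum p K L α β q Q N c 0) :=
  stmt_13_general p m q Q N hQ K L hK hL α hα β hβ hN c
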